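/- arXiv:2002.06310 — 5 statements merged into one kernel-verified Lean document; each statement's English description precedes it below -/
import Mathlib

section
/- For every irrational x ∈ (0,1) and every integer n ≥ 0, the n-th principal convergent p_n/q_n of the odd-odd continued fraction of x is a best 1-rational approximation of x. -/
/-- The odd-odd continued fraction map on `[0,1]`.  For `x ∈ [(k-1)/k, k/(k+1))` with `k ≥ 1`
one has `k = ⌊1/(1-x)⌋`, and the two branches are separated by `(2k-1)/(2k+1)`. -/
noncomputable def oocfT (x : ℝ) : ℝ :=
  if x = 1 then 1
  else if x < (2 * (⌊1 / (1 - x)⌋ : ℝ) - 1) / (2 * (⌊1 / (1 - x)⌋ : ℝ) + 1) then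
    ((⌊1 / (1 - x)⌋ : ℝ) * x - ((⌊1 / (1 - x)⌋ : ℝ) - 1)) /
      ((⌊1 / (1 - x)⌋ : ℝ) - ((⌊1 / (1 - x)⌋ : ℝ) + 1) * x)
  else
    ((⌊1 / (1 - x)⌋ : ℝ) - ((⌊1 / (1 - x)⌋ : ℝ) + 1) * x) /
      ((⌊1 / (1 - x)⌋ : ℝ) * x - ((⌊1 / (1 - x)⌋ : ℝ) - 1))

/-- OOCF partial quotient `a` of a point `y`: `a = k+1` if `y` is in the lower branch
interval `((k-1)/k, (2k-1)/(2k+1))`, and `a = k` if `y ∈ ((2k-1)/(2k+1), k/(k+1))`,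
where `k = ⌊1/(1-y)⌋`. -/
noncomputable def oocfA (y : ℝ) : ℤ :=
  if y < (2 * (⌊1 / (1 - y)⌋ : ℝ) - 1) / (2 * (⌊1 / (1 - y)⌋ : ℝ) + 1) then ⌊1 / (1 - y)⌋ + 1
  else ⌊1 / (1 - y)⌋

/-- OOCF partial quotient `ε` of a point `y`: `ε = -1` on the lower branch interval and
`ε = 1` on the upper one. -/
noncomputable def oocfE (y : ℝ) : ℤ :=
  if y < (2 * (⌊1 / (1 - y)⌋ : ℝ) - 1) / (2 * (⌊1 / (1 - y)⌋ : ℝ) + 1) then -1 else 1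

/-- The OOCF convergents `(p'_n, q'_n, p_n, q_n)` of `x`, defined by
`p'_0 = 1, q'_0 = 0, p_0 = 1, q_0 = 1` and
`p'_n = a_n p_{n-1} - p'_{n-1}`, `q'_n = a_n q_{n-1} - q'_{n-1}`,
`p_n = 2 p'_n + ε_n p_{n-1}`, `q_n = 2 q'_n + ε_n q_{n-1}`,
where `(a_n, ε_n)` are the partial quotients of `x`, i.e. `a_n = oocfA (oocfT^[n-1] x)`,
`ε_n = oocfE (oocfT^[n-1] x)`. -/
noncomputable def oocfConv (x : ℝ) : ℕ → ℤ × ℤ × ℤ × ℤ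
  | 0 => (1, 0, 1, 1)
  | n + 1 =>
    let c := oocfConv x n
    (oocfA (oocfT^[n] x) * c.2.2.1 - c.1,
     oocfA (oocfT^[n] x) * c.2.2.2 - c.2.1,
     2 * (oocfA (oocfT^[n] x) * c.2.2.1 - c.1) + oocfE (oocfT^[n] x) * c.2.2.1,
     2 * (oocfA (oocfT^[n] x) * c.2.2.2 - c.2.1) + oocfE (oocfT^[n] x) * c.2.2.2)

/-- `n`-th sub-convergent numerator `p'_n`. -/
noncomputable def oocfP' (x : ℝ) (n : ℕ) : ℤ := (oocfConv x n).1

/-- `n`-th sub-convergent denominator `q'_n`. -/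
noncomputable def oocfQ' (x : ℝ) (n : ℕ) : ℤ := (oocfConv x n).2.1

/-- `n`-th principal convergent numerator `p_n`. -/
noncomputable def oocfP (x : ℝ) (n : ℕ) : ℤ := (oocfConv x n).2.2.1

/-- `n`-th principal convergent denominator `q_n`. -/
noncomputable def oocfQ (x : ℝ) (n : ℕ) : ℤ := (oocfConv x n).2.2.2

/-- `n`-th pseudo-convergent numerator: `p''_n = p'_n + ε_n p_{n-1}` for `n ≥ 1`
(with the convention `p''_0 = 0`). -/
noncomputable def oocfP'' (x : ℝ) : ℕ → ℤ
  | 0 => 0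
  | n + 1 => oocfP' x (n + 1) + oocfE (oocfT^[n] x) * oocfP x n

/-- `n`-th pseudo-convergent denominator: `q''_n = q'_n + ε_n q_{n-1}` for `n ≥ 1`
(with the convention `q''_0 = 1`). -/
noncomputable def oocfQ'' (x : ℝ) : ℕ → ℤ
  | 0 => 1
  | n + 1 => oocfQ' x (n + 1) + oocfE (oocfT^[n] x) * oocfQ x n

/-- `a/b` is a 1-rational: `b > 0`, `a`, `b` both odd and coprime. -/
def IsOneRat (a b : ℤ) : Prop := 0 < b ∧ Odd a ∧ Odd b ∧ IsCoprime a b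

/-- `p/q` is a best 1-rational approximation of `x`: it is a 1-rational and
`|qx - p| < |bx - a|` for every 1-rational `a/b ≠ p/q` with `0 < b ≤ q`. -/
def IsBestOneRatApprox (x : ℝ) (p q : ℤ) : Prop :=
  IsOneRat p q ∧
    ∀ a b : ℤ, IsOneRat a b → b ≤ q → (a : ℝ) / (b : ℝ) ≠ (p : ℝ) / (q : ℝ) →
      |(q : ℝ) * x - (p : ℝ)| < |(b : ℝ) * x - (a : ℝ)|

/-!
Put `t = T^n(x)`. By induction, `x = (p''_n + p'_n t) / (q''_n + q'_n t)` with `q'_n ≥ 0`,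
`q''_n ≥ 1` and `p'_n q''_n - p''_n q'_n = ±1`, so `(p_n, q_n) = (p'_n + p''_n, q'_n + q''_n)` and
`(p''_n, q''_n)` form a basis of `ℤ²`. Write a 1-rational `a/b ≠ p_n/q_n` as
`m (p_n, q_n) + l (p''_n, q''_n)`. Since `p''_n + q''_n` is odd, `m` is odd, and `0 < b ≤ q_n` then
forces `m` and `l` to have opposite signs. Hence
`(q''_n + q'_n t) |b x - a| = |m| (1 - t) + |l| t > 1 - t = (q''_n + q'_n t) |q_n x - p_n|`.
-/

open Set

theorem IsCoprime.of_isUnit_mul_sub_mul {R : Type*} [CommRing R] {a b c d : R}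
    (h : IsUnit (a * d - c * b)) : IsCoprime a b := by
  obtain ⟨u, hu⟩ := h
  exact ⟨↑u⁻¹ * d, -(↑u⁻¹ * c), by linear_combination -(↑u⁻¹ : R) * hu + u.inv_mul⟩

theorem exists_eq_add_of_isUnit_mul_sub_mul {R : Type*} [CommRing R] {a b c d : R}
    (h : IsUnit (a * d - c * b)) (e f : R) :
    ∃ m l : R, e = m * a + l * c ∧ f = m * b + l * d := by
  obtain ⟨u, hu⟩ := h
  refine ⟨↑u⁻¹ * (e * d - f * c), ↑u⁻¹ * (f * a - e * b), ?_, ?_⟩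
  · linear_combination (↑u⁻¹ * e : R) * hu - e * u.inv_mul
  · linear_combination (↑u⁻¹ * f : R) * hu - f * u.inv_mul

theorem Irrational.of_mul_add_eq_add_mul {y z : ℝ} (hy : Irrational y) {a b c d : ℤ}
    (h : y * (c + d * z) = a + b * z) (hne : (c : ℝ) + d * z ≠ 0) : Irrational z := by
  rintro ⟨q, rfl⟩
  refine hy ⟨(a + b * q) / (c + d * q), ?_⟩
  push_cast
  rw [div_eq_iff hne, h]

section Step

variable {y : ℝ}

theorem one_le_floor_one_div_one_sub (hy : y ∈ Ico 0 1) : 1 ≤ ⌊1 / (1 - y)⌋ := by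
  rw [Int.le_floor, Int.cast_one, le_div_iff₀ (by linarith [hy.2])]
  linarith [hy.1]

theorem floor_one_div_one_sub_mul_le (hy : y ∈ Ico 0 1) :
    (⌊1 / (1 - y)⌋ : ℝ) * (1 - y) ≤ 1 ∧ 1 < (⌊1 / (1 - y)⌋ + 1 : ℝ) * (1 - y) := by
  have h : 0 < 1 - y := by linarith [hy.2]
  exact ⟨(le_div_iff₀ h).mp (Int.floor_le _), (div_lt_iff₀ h).mp (Int.lt_floor_add_one _)⟩

theorem oocfT_mem_Icc (hy : y ∈ Ico 0 1) : oocfT y ∈ Icc 0 1 := by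
  have hk : (1 : ℝ) ≤ ⌊1 / (1 - y)⌋ := by exact_mod_cast one_le_floor_one_div_one_sub hy
  obtain ⟨hlo, hhi⟩ := floor_one_div_one_sub_mul_le hy
  unfold oocfT
  rw [if_neg hy.2.ne]
  set k : ℝ := (⌊1 / (1 - y)⌋ : ℝ)
  split_ifs with h
  · rw [lt_div_iff₀ (by linarith)] at h
    have hden : 0 < k - (k + 1) * y := by linarith
    exact ⟨div_nonneg (by linarith) hden.le, (div_le_one hden).mpr (by linarith)⟩
  · rw [not_lt, div_le_iff₀ (by linarith)] at h
    have hden : 0 < k * y - (k - 1) := by nlinarith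
    exact ⟨div_nonneg (by linarith) hden.le, (div_le_one hden).mpr (by linarith)⟩

theorem oocfT_spec (hy : y ∈ Ico 0 1) :
    y * ((oocfA y + oocfE y : ℝ) + oocfA y * oocfT y) =
      (oocfA y - 1 + oocfE y : ℝ) + (oocfA y - 1) * oocfT y := by
  have hk : (1 : ℝ) ≤ ⌊1 / (1 - y)⌋ := by exact_mod_cast one_le_floor_one_div_one_sub hy
  obtain ⟨hlo, hhi⟩ := floor_one_div_one_sub_mul_le hy
  unfold oocfT oocfA oocfE
  rw [if_neg hy.2.ne]
  set k : ℤ := ⌊1 / (1 - y)⌋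
  split_ifs with h
  · have hden : (k : ℝ) - (k + 1) * y ≠ 0 := by linarith
    push_cast
    linear_combination -div_mul_cancel₀ ((k : ℝ) * y - (k - 1)) hden
  · rw [not_lt, div_le_iff₀ (by linarith)] at h
    have hden : (k : ℝ) * y - (k - 1) ≠ 0 := by nlinarith
    push_cast
    linear_combination div_mul_cancel₀ ((k : ℝ) - (k + 1) * y) hden

theorem one_le_oocfA (hy : y ∈ Ico 0 1) : 1 ≤ oocfA y := by
  have := one_le_floor_one_div_one_sub hy
  unfold oocfA
  split_ifs <;> omega

theorem one_le_oocfA_add_oocfE (hy : y ∈ Ico 0 1) : 1 ≤ oocfA y + oocfE y := by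
  have := one_le_floor_one_div_one_sub hy
  unfold oocfA oocfE
  split_ifs <;> omega

theorem oocfE_eq_one_or_neg_one (y : ℝ) : oocfE y = 1 ∨ oocfE y = -1 := by
  unfold oocfE
  split_ifs <;> simp

theorem mapsTo_oocfT :
    MapsTo oocfT (Ioo 0 1 ∩ {y | Irrational y}) (Ioo 0 1 ∩ {y | Irrational y}) := by
  rintro y ⟨hy, hirr⟩
  replace hy : y ∈ Ico 0 1 := Ioo_subset_Ico_self hy
  obtain ⟨hT0, hT1⟩ := oocfT_mem_Icc hy
  have hden : (0 : ℝ) < ((oocfA y + oocfE y : ℤ) : ℝ) + (oocfA y : ℤ) * oocfT y := by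
    have := one_le_oocfA_add_oocfE hy
    have := one_le_oocfA hy
    positivity
  have hT : Irrational (oocfT y) :=
    hirr.of_mul_add_eq_add_mul (a := oocfA y - 1 + oocfE y) (b := oocfA y - 1)
      (by push_cast; exact oocfT_spec hy) hden.ne'
  exact ⟨⟨hT0.lt_of_ne hT.ne_zero.symm, hT1.lt_of_ne hT.ne_one⟩, hT⟩

end Step

section Convergents

variable (x : ℝ) (n : ℕ)

theorem oocfP'_succ : oocfP' x (n + 1) = oocfA (oocfT^[n] x) * oocfP x n - oocfP' x n := rfl

theorem oocfQ'_succ : oocfQ' x (n + 1) = oocfA (oocfT^[n] x) * oocfQ x n - oocfQ' x n := rfl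

theorem oocfP_succ :
    oocfP x (n + 1) = 2 * oocfP' x (n + 1) + oocfE (oocfT^[n] x) * oocfP x n := rfl

theorem oocfQ_succ :
    oocfQ x (n + 1) = 2 * oocfQ' x (n + 1) + oocfE (oocfT^[n] x) * oocfQ x n := rfl

theorem oocfP''_succ : oocfP'' x (n + 1) = oocfP' x (n + 1) + oocfE (oocfT^[n] x) * oocfP x n :=
  rfl

theorem oocfQ''_succ : oocfQ'' x (n + 1) = oocfQ' x (n + 1) + oocfE (oocfT^[n] x) * oocfQ x n :=
  rfl

theorem oocfP_eq_add : oocfP x n = oocfP' x n + oocfP'' x n := by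
  cases n with
  | zero => rfl
  | succ n => rw [oocfP_succ, oocfP''_succ]; ring

theorem oocfQ_eq_add : oocfQ x n = oocfQ' x n + oocfQ'' x n := by
  cases n with
  | zero => rfl
  | succ n => rw [oocfQ_succ, oocfQ''_succ]; ring

theorem isUnit_oocf_det : IsUnit (oocfP' x n * oocfQ'' x n - oocfP'' x n * oocfQ' x n) := by
  induction n with
  | zero => exact isUnit_one
  | succ n ih =>
    have hε : IsUnit (oocfE (oocfT^[n] x)) := Int.isUnit_iff.mpr (oocfE_eq_one_or_neg_one _)
    have hdet : oocfP' x (n + 1) * oocfQ'' x (n + 1) - oocfP'' x (n + 1) * oocfQ' x (n + 1) =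
        -oocfE (oocfT^[n] x) * (oocfP' x n * oocfQ'' x n - oocfP'' x n * oocfQ' x n) := by
      rw [oocfP''_succ, oocfQ''_succ, oocfP'_succ, oocfQ'_succ, oocfP_eq_add, oocfQ_eq_add]
      ring
    rw [hdet]
    exact hε.neg.mul ih

theorem odd_oocfE (y : ℝ) : Odd (oocfE y) := by
  rcases oocfE_eq_one_or_neg_one y with h | h <;> rw [h] <;> decide

theorem odd_oocfP : Odd (oocfP x n) := by
  induction n with
  | zero => exact odd_one
  | succ n ih => rw [oocfP_succ]; exact (even_two_mul _).add_odd ((odd_oocfE _).mul ih)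

theorem odd_oocfQ : Odd (oocfQ x n) := by
  induction n with
  | zero => exact odd_one
  | succ n ih => rw [oocfQ_succ]; exact (even_two_mul _).add_odd ((odd_oocfE _).mul ih)

theorem odd_oocfP'_add_oocfQ' : Odd (oocfP' x n + oocfQ' x n) := by
  induction n with
  | zero => exact odd_one
  | succ n ih =>
    have h : oocfP' x (n + 1) + oocfQ' x (n + 1) =
        oocfA (oocfT^[n] x) * (oocfP x n + oocfQ x n) - (oocfP' x n + oocfQ' x n) := by
      rw [oocfP'_succ, oocfQ'_succ]; ring
    rw [h]
    exact (((odd_oocfP x n).add_odd (odd_oocfQ x n)).mul_left _).sub_odd ih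

theorem odd_oocfP''_add_oocfQ'' : Odd (oocfP'' x n + oocfQ'' x n) := by
  have h : oocfP'' x n + oocfQ'' x n = (oocfP x n + oocfQ x n) - (oocfP' x n + oocfQ' x n) := by
    rw [oocfP_eq_add, oocfQ_eq_add]; ring
  rw [h]
  exact ((odd_oocfP x n).add_odd (odd_oocfQ x n)).sub_odd (odd_oocfP'_add_oocfQ' x n)

variable {x}

theorem oocfQ'_nonneg_and_one_le_oocfQ'' (horb : ∀ k, oocfT^[k] x ∈ Ico 0 1) :
    0 ≤ oocfQ' x n ∧ 1 ≤ oocfQ'' x n := by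
  induction n with
  | zero => exact ⟨le_rfl, le_rfl⟩
  | succ n ih =>
    have ha := one_le_oocfA (horb n)
    have haε := one_le_oocfA_add_oocfE (horb n)
    have hq' : oocfQ' x (n + 1) =
        (oocfA (oocfT^[n] x) - 1) * oocfQ' x n + oocfA (oocfT^[n] x) * oocfQ'' x n := by
      rw [oocfQ'_succ, oocfQ_eq_add]; ring
    have hq'' : oocfQ'' x (n + 1) = (oocfA (oocfT^[n] x) + oocfE (oocfT^[n] x) - 1) * oocfQ' x n +
        (oocfA (oocfT^[n] x) + oocfE (oocfT^[n] x)) * oocfQ'' x n := by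
      rw [oocfQ''_succ, oocfQ'_succ, oocfQ_eq_add]; ring
    rw [hq', hq'']
    constructor <;> nlinarith

theorem oocfT_iterate_spec (horb : ∀ k, oocfT^[k] x ∈ Ico 0 1) :
    x * ((oocfQ'' x n : ℝ) + oocfQ' x n * oocfT^[n] x) =
      (oocfP'' x n : ℝ) + oocfP' x n * oocfT^[n] x := by
  induction n with
  | zero => simp [oocfP'', oocfQ'', oocfP', oocfQ', oocfConv]
  | succ n ih =>
    have hstep := oocfT_spec (horb n)
    rw [Function.iterate_succ_apply', oocfQ''_succ, oocfP''_succ, oocfQ'_succ, oocfP'_succ,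
      oocfP_eq_add, oocfQ_eq_add]
    push_cast
    linear_combination ((oocfA (oocfT^[n] x) + oocfE (oocfT^[n] x) : ℝ) +
        oocfA (oocfT^[n] x) * oocfT (oocfT^[n] x)) * ih +
      ((oocfP' x n : ℝ) - x * oocfQ' x n) * hstep

end Convergents

theorem error_mul_denom_eq_det_mul {R : Type*} [CommRing R] {x t p' q' p'' q'' : R}
    (hx : x * (q'' + q' * t) = p'' + p' * t) (m l : R) :
    ((m * (q' + q'') + l * q'') * x - (m * (p' + p'') + l * p'')) * (q'' + q' * t) =
      (p' * q'' - p'' * q') * (m * (t - 1) + l * t) := by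
  linear_combination (m * (q' + q'') + l * q'') * hx

theorem one_sub_lt_abs_mul_sub_one_add_mul {t : ℝ} (ht : t ∈ Ioo 0 1) {m l : ℤ}
    (hml : m * l < 0) : 1 - t < |m * (t - 1) + l * t| := by
  obtain ⟨ht0, ht1⟩ := ht
  rcases lt_or_gt_of_ne (left_ne_zero_of_mul hml.ne) with hm | hm
  · have hl : (1 : ℝ) ≤ l := by exact_mod_cast pos_of_mul_neg_right hml hm.le
    have hm : (m : ℝ) ≤ -1 := by exact_mod_cast Int.le_sub_one_of_lt hm
    rw [lt_abs]; left; nlinarith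
  · have hl : (l : ℝ) ≤ -1 := by
      exact_mod_cast Int.le_sub_one_of_lt (neg_of_mul_neg_right hml hm.le)
    have hm : (1 : ℝ) ≤ m := by exact_mod_cast hm
    rw [lt_abs]; right; nlinarith

theorem isBestOneRatApprox_of_mul_add_eq {x t : ℝ} (ht : t ∈ Ioo 0 1) {p' q' p'' q'' : ℤ}
    (hq' : 0 ≤ q') (hq'' : 1 ≤ q'') (hdet : IsUnit (p' * q'' - p'' * q'))
    (hp : Odd (p' + p'')) (hq : Odd (q' + q'')) (hpq'' : Odd (p'' + q''))
    (hx : x * (q'' + q' * t) = p'' + p' * t) :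
    IsBestOneRatApprox x (p' + p'') (q' + q'') := by
  have hdet' : IsUnit ((p' + p'') * q'' - p'' * (q' + q'')) := by convert hdet using 1; ring
  refine ⟨⟨by omega, hp, hq, .of_isUnit_mul_sub_mul hdet'⟩, ?_⟩
  rintro a b ⟨hb, ha, hb_odd, -⟩ hbq hne
  obtain ⟨m, l, rfl, rfl⟩ := exists_eq_add_of_isUnit_mul_sub_mul hdet' a b
  -- mod 2, `a + b ≡ l (p'' + q'') ≡ l`, so `l` is even and `m ≡ a` is odd
  have hm : Odd m := by
    simp only [Int.odd_add, Int.odd_mul, ← Int.not_odd_iff_even] at hp hq hpq'' ha hb_odd ⊢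
    tauto
  have hl : l ≠ 0 := by
    rintro rfl
    obtain rfl : m = 1 := by nlinarith
    simp at hne
  -- `b ≤ q` rules out coefficients of equal sign
  have hml : m * l < 0 := by
    obtain ⟨k, rfl⟩ := hm
    rcases lt_or_gt_of_ne (show 2 * k + 1 ≠ 0 by omega) with hm0 | hm0 <;>
    rcases lt_or_gt_of_ne hl with hl0 | hl0 <;> nlinarith
  have hD : (0 : ℝ) < q'' + q' * t := by
    have : (1 : ℝ) ≤ q'' := by exact_mod_cast hq''
    have : (0 : ℝ) ≤ q' := by exact_mod_cast hq'
    nlinarith [ht.1]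
  have hd : (0 : ℝ) < |(p' * q'' - p'' * q' : ℝ)| := by
    exact_mod_cast abs_pos.mpr hdet.ne_zero
  have hpq := error_mul_denom_eq_det_mul hx 1 0
  have hab := error_mul_denom_eq_det_mul hx m l
  simp only [one_mul, zero_mul, add_zero] at hpq
  push_cast
  rw [← mul_lt_mul_iff_of_pos_right hD, ← abs_of_pos hD, ← abs_mul, ← abs_mul, hpq, hab,
    abs_mul, abs_mul, abs_of_neg (by linarith [ht.2] : t - 1 < 0), neg_sub]
  exact mul_lt_mul_of_pos_left (one_sub_lt_abs_mul_sub_one_add_mul ht hml) hd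

/-- For every irrational `x ∈ (0,1)` and every `n ≥ 0`, the `n`-th principal convergent
`p_n/q_n` of the odd-odd continued fraction of `x` is a best 1-rational approximation
of `x`. -/
theorem oocf_principal_convergent_isBestOneRatApprox
    (x : ℝ) (hx : x ∈ Set.Ioo (0 : ℝ) 1) (hirr : Irrational x) (n : ℕ) :
    IsBestOneRatApprox x (oocfP x n) (oocfQ x n) := by
  have horb (k : ℕ) : oocfT^[k] x ∈ Ioo 0 1 := (mapsTo_oocfT.iterate k ⟨hx, hirr⟩).1
  have horb' (k : ℕ) : oocfT^[k] x ∈ Ico 0 1 := Ioo_subset_Ico_self (horb k)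
  obtain ⟨hq', hq''⟩ := oocfQ'_nonneg_and_one_le_oocfQ'' n horb'
  have hp := odd_oocfP x n
  have hq := odd_oocfQ x n
  rw [oocfP_eq_add] at hp ⊢
  rw [oocfQ_eq_add] at hq ⊢
  exact isBestOneRatApprox_of_mul_add_eq (horb n) hq' hq'' (isUnit_oocf_det x n) hp hq
    (odd_oocfP''_add_oocfQ'' x n) (oocfT_iterate_spec n horb')
end

section
/- Let x ∈ [0,1] and suppose there exist integers 0 ≤ i < j with T^i(x) = T^j(x) (i.e., the orbit of x under the odd-odd continued fraction map is eventually periodic). Then either x is rational, or there exist integers α, β, γ with α ≠ 0 such that α·x² + β·x + γ = 0 (i.e., x is a quadratic irrational). -/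
/-!
Each branch of the odd-odd map is an integer Möbius transformation `x ↦ (a x + b) / (c x + d)`
of determinant `±1`, and on `[0, 1)` its denominator lies in `(0, 1 - x]`. So on a periodic point
`y ∈ (0, 1)` of period `m`, `T^[m]` acts by an integer Möbius map whose denominator lies strictly
between `0` and `1`; this forces `c ≠ 0`, and `y = (a y + b) / (c y + d)` is a genuine quadratic
equation. Integer Möbius maps of nonzero determinant pull a nontrivial integer relation of degree
at most two back to another such relation, so it passes from `T^[i] x` back to `x`.
-/

open Set Matrix

noncomputable def moebiusDenom (M : Matrix (Fin 2) (Fin 2) ℤ) (x : ℝ) : ℝ := M 1 0 * x + M 1 1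

noncomputable def moebius (M : Matrix (Fin 2) (Fin 2) ℤ) (x : ℝ) : ℝ :=
  (M 0 0 * x + M 0 1) / moebiusDenom M x

lemma moebiusDenom_mul (M N : Matrix (Fin 2) (Fin 2) ℤ) {x : ℝ} (hN : moebiusDenom N x ≠ 0) :
    moebiusDenom (M * N) x = moebiusDenom M (moebius N x) * moebiusDenom N x := by
  simp only [moebiusDenom, moebius, mul_apply, Fin.sum_univ_two] at hN ⊢
  push_cast
  field_simp
  ring

lemma moebius_mul (M N : Matrix (Fin 2) (Fin 2) ℤ) {x : ℝ} (hN : moebiusDenom N x ≠ 0) :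
    moebius (M * N) x = moebius M (moebius N x) := by
  have hnum : ((M * N) 0 0 : ℝ) * x + (M * N) 0 1
      = ((M 0 0 : ℝ) * moebius N x + M 0 1) * moebiusDenom N x := by
    simp only [moebiusDenom, moebius, mul_apply, Fin.sum_univ_two] at hN ⊢
    push_cast
    field_simp
    ring
  rw [moebius, hnum, moebiusDenom_mul M N hN, mul_div_mul_right _ _ hN]
  rfl

def SatisfiesIntQuadratic (x : ℝ) : Prop :=
  ∃ α β γ : ℤ, (α, β, γ) ≠ 0 ∧ α * x ^ 2 + β * x + γ = 0

lemma satisfiesIntQuadratic_ratCast (q : ℚ) : SatisfiesIntQuadratic q := by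
  refine ⟨0, q.den, -q.num, by simp, ?_⟩
  rw [Rat.cast_def]
  push_cast
  field_simp
  ring

lemma SatisfiesIntQuadratic.of_moebius {M : Matrix (Fin 2) (Fin 2) ℤ} {x : ℝ} (hdet : M.det ≠ 0)
    (hden : moebiusDenom M x ≠ 0) (h : SatisfiesIntQuadratic (moebius M x)) :
    SatisfiesIntQuadratic x := by
  obtain ⟨α, β, γ, hne, hrel⟩ := h
  simp only [moebius, moebiusDenom] at hrel hden
  set a := M 0 0
  set b := M 0 1
  set c := M 1 0
  set d := M 1 1
  have hΔ : a * d - b * c ≠ 0 := by rwa [det_fin_two] at hdet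
  set A := α * a ^ 2 + β * a * c + γ * c ^ 2
  set B := 2 * α * a * b + β * (a * d + b * c) + 2 * γ * c * d
  set C := α * b ^ 2 + β * b * d + γ * d ^ 2
  refine ⟨A, B, C, ?_, ?_⟩
  · -- `(α, β, γ) ↦ (A, B, C)` is the symmetric square of `M`; that of `adj M` inverts it up to
    -- the factor `(det M) ^ 2`
    rintro hABC
    obtain ⟨hA, hB, hC⟩ : A = 0 ∧ B = 0 ∧ C = 0 := by simpa only [Prod.mk_eq_zero] using hABC
    refine hne (Prod.mk_eq_zero.mpr ⟨?_, Prod.mk_eq_zero.mpr ⟨?_, ?_⟩⟩) <;>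
      apply mul_right_injective₀ (pow_ne_zero 2 hΔ) <;> simp only [mul_zero]
    · linear_combination d ^ 2 * hA - c * d * hB + c ^ 2 * hC
    · linear_combination -2 * b * d * hA + (a * d + b * c) * hB - 2 * a * c * hC
    · linear_combination b ^ 2 * hA - a * b * hB + a ^ 2 * hC
  · simp only [A, B, C]
    push_cast
    linear_combination (norm := skip) ((c : ℝ) * x + d) ^ 2 * hrel
    field_simp
    ring

lemma satisfiesIntQuadratic_of_moebius_eq_self {M : Matrix (Fin 2) (Fin 2) ℤ} {y : ℝ}
    (hc : M 1 0 ≠ 0) (hden : moebiusDenom M y ≠ 0) (hfix : moebius M y = y) :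
    SatisfiesIntQuadratic y := by
  refine ⟨M 1 0, M 1 1 - M 0 0, -M 0 1, by simp [hc], ?_⟩
  rw [moebius, div_eq_iff hden, moebiusDenom] at hfix
  push_cast
  linear_combination -hfix

lemma SatisfiesIntQuadratic.not_irrational_or_quadratic {x : ℝ} (h : SatisfiesIntQuadratic x) :
    ¬ Irrational x ∨ ∃ α β γ : ℤ, α ≠ 0 ∧ (α : ℝ) * x ^ 2 + β * x + γ = 0 := by
  obtain ⟨α, β, γ, hne, hrel⟩ := h
  by_cases hα : α = 0
  · left
    subst hα
    have hβ : β ≠ 0 := by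
      rintro rfl
      simp_all
    rintro hirr
    apply hirr
    refine ⟨-γ / β, ?_⟩
    push_cast
    field_simp
    push_cast at hrel
    linear_combination -hrel
  · exact Or.inr ⟨α, β, γ, hα, hrel⟩

lemma oocfT_eq_ite {x : ℝ} (hx : x < 1) : ∃ k : ℤ, 0 ≤ k * x - (k - 1) ∧ 0 < k - (k + 1) * x ∧
    oocfT x = if k * x - (k - 1) < k - (k + 1) * x
      then (k * x - (k - 1)) / (k - (k + 1) * x) else (k - (k + 1) * x) / (k * x - (k - 1)) := by
  have h1x : 0 < 1 - x := by linarith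
  have hk_le : (⌊1 / (1 - x)⌋ : ℝ) * (1 - x) ≤ 1 := (le_div_iff₀ h1x).mp (Int.floor_le _)
  have hk_lt : 1 < (⌊1 / (1 - x)⌋ + 1 : ℝ) * (1 - x) :=
    (div_lt_iff₀ h1x).mp (Int.lt_floor_add_one _)
  have hk : (0 : ℝ) ≤ ⌊1 / (1 - x)⌋ := by exact_mod_cast Int.floor_nonneg.mpr (by positivity)
  refine ⟨⌊1 / (1 - x)⌋, by linarith, by linarith, ?_⟩
  rw [oocfT, if_neg hx.ne]
  refine if_congr ?_ rfl rfl
  rw [lt_div_iff₀ (by linarith)]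
  constructor <;> intro <;> linarith

lemma mapsTo_oocfT_s2 : MapsTo oocfT (Icc 0 1) (Icc 0 1) := by
  rintro x ⟨-, hx1⟩
  rcases hx1.lt_or_eq with hx1 | rfl
  · obtain ⟨k, hA, hB, hT⟩ := oocfT_eq_ite hx1
    rw [hT]
    split_ifs with hAB
    · exact ⟨div_nonneg hA hB.le, div_le_one_of_le₀ hAB.le hB.le⟩
    · exact ⟨div_nonneg hB.le hA, div_le_one_of_le₀ (not_lt.mp hAB) hA⟩
  · simp [oocfT]

lemma exists_moebius_oocfT_of_lt_one {x : ℝ} (hx : x < 1) :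
    ∃ M : Matrix (Fin 2) (Fin 2) ℤ, M.det ≠ 0 ∧ 0 < moebiusDenom M x ∧
      moebiusDenom M x ≤ 1 - x ∧ oocfT x = moebius M x := by
  obtain ⟨k, hA, hB, hT⟩ := oocfT_eq_ite hx
  -- the two affine forms `k x - (k - 1)` and `k - (k + 1) x` are nonnegative and sum to `1 - x`
  split_ifs at hT with hAB
  · refine ⟨!![k, 1 - k; -(k + 1), k], ?_, ?_, ?_, ?_⟩ <;>
      simp only [det_fin_two_of, moebiusDenom, moebius, hT, of_apply, cons_val', cons_val_zero,
        cons_val_one, empty_val', cons_val_fin_one] <;> push_cast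
    · ring_nf; simp
    · linarith
    · linarith
    · ring_nf
  · refine ⟨!![-(k + 1), k; k, 1 - k], ?_, ?_, ?_, ?_⟩ <;>
      simp only [det_fin_two_of, moebiusDenom, moebius, hT, of_apply, cons_val', cons_val_zero,
        cons_val_one, empty_val', cons_val_fin_one] <;> push_cast
    · ring_nf; simp
    · linarith
    · linarith
    · ring_nf

lemma exists_moebius_oocfT {x : ℝ} (hx : x ∈ Icc 0 1) :
    ∃ M : Matrix (Fin 2) (Fin 2) ℤ, M.det ≠ 0 ∧ 0 < moebiusDenom M x ∧
      moebiusDenom M x ≤ 1 ∧ oocfT x = moebius M x := by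
  rcases hx.2.lt_or_eq with hx1 | rfl
  · obtain ⟨M, hdet, hpos, hle, hT⟩ := exists_moebius_oocfT_of_lt_one hx1
    exact ⟨M, hdet, hpos, by linarith [hx.1], hT⟩
  · exact ⟨1, by simp, by simp [moebiusDenom], by simp [moebiusDenom],
      by simp [oocfT, moebius, moebiusDenom]⟩

lemma exists_moebius_oocfT_iterate {x : ℝ} (hx : x ∈ Icc 0 1) (n : ℕ) :
    ∃ M : Matrix (Fin 2) (Fin 2) ℤ, 0 < moebiusDenom M x ∧ moebiusDenom M x ≤ 1 ∧
      oocfT^[n] x = moebius M x := by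
  induction n generalizing x with
  | zero =>
    exact ⟨1, by simp [moebiusDenom], by simp [moebiusDenom], by simp [moebius, moebiusDenom]⟩
  | succ n ih =>
    obtain ⟨S, -, hSpos, hSle, hS⟩ := exists_moebius_oocfT hx
    obtain ⟨N, hNpos, hNle, hN⟩ := ih (mapsTo_oocfT_s2 hx)
    refine ⟨N * S, ?_, ?_, ?_⟩
    · rw [moebiusDenom_mul N S hSpos.ne', ← hS]
      positivity
    · rw [moebiusDenom_mul N S hSpos.ne', ← hS]
      nlinarith
    · rw [Function.iterate_succ_apply, hN, hS, moebius_mul N S hSpos.ne']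

lemma SatisfiesIntQuadratic.of_oocfT_iterate {x : ℝ} (hx : x ∈ Icc 0 1) (n : ℕ)
    (h : SatisfiesIntQuadratic (oocfT^[n] x)) : SatisfiesIntQuadratic x := by
  induction n generalizing x with
  | zero => exact h
  | succ n ih =>
    obtain ⟨M, hdet, hpos, -, hT⟩ := exists_moebius_oocfT hx
    rw [Function.iterate_succ_apply] at h
    exact .of_moebius hdet hpos.ne' (hT ▸ ih (mapsTo_oocfT_s2 hx) h)

lemma satisfiesIntQuadratic_of_oocfT_periodic {y : ℝ} (hy : y ∈ Icc 0 1) {m : ℕ} (hm : 0 < m)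
    (hper : oocfT^[m] y = y) : SatisfiesIntQuadratic y := by
  rcases eq_or_ne y 0 with rfl | hy0
  · simpa using satisfiesIntQuadratic_ratCast 0
  rcases eq_or_ne y 1 with rfl | hy1
  · simpa using satisfiesIntQuadratic_ratCast 1
  obtain ⟨n, rfl⟩ := Nat.exists_eq_add_one_of_ne_zero hm.ne'
  obtain ⟨S, -, hSpos, hSle, hS⟩ := exists_moebius_oocfT_of_lt_one (lt_of_le_of_ne hy.2 hy1)
  obtain ⟨N, hNpos, hNle, hN⟩ := exists_moebius_oocfT_iterate (mapsTo_oocfT_s2 hy) n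
  have hden : moebiusDenom (N * S) y = moebiusDenom N (oocfT y) * moebiusDenom S y := by
    rw [moebiusDenom_mul N S hSpos.ne', hS]
  have hpos : 0 < moebiusDenom (N * S) y := by rw [hden]; positivity
  have hlt : moebiusDenom (N * S) y < 1 := by
    rw [hden]
    nlinarith [lt_of_le_of_ne hy.1 hy0.symm]
  have hc : (N * S) 1 0 ≠ 0 := by
    intro hc
    have hd : (0 : ℝ) < (N * S) 1 1 ∧ ((N * S) 1 1 : ℝ) < 1 := by
      simpa [moebiusDenom, hc] using And.intro hpos hlt
    norm_cast at hd
    omega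
  refine satisfiesIntQuadratic_of_moebius_eq_self hc hpos.ne' ?_
  rw [moebius_mul N S hSpos.ne', ← hS, ← hN, ← Function.iterate_succ_apply, hper]

/-- If the orbit of `x ∈ [0,1]` under the odd-odd continued fraction map is eventually
periodic, then `x` is rational or a quadratic irrational. -/
theorem oocf_eventually_periodic_imp_rat_or_quadratic
    (x : ℝ) (hx : x ∈ Set.Icc (0 : ℝ) 1) (i j : ℕ) (hij : i < j)
    (h : oocfT^[i] x = oocfT^[j] x) :
    (¬ Irrational x) ∨
      ∃ α β γ : ℤ, α ≠ 0 ∧ (α : ℝ) * x ^ 2 + (β : ℝ) * x + (γ : ℝ) = 0 := by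
  have hper : oocfT^[j - i] (oocfT^[i] x) = oocfT^[i] x := by
    rw [← Function.iterate_add_apply, Nat.sub_add_cancel hij.le, h]
  have hy := satisfiesIntQuadratic_of_oocfT_periodic (mapsTo_oocfT_s2.iterate i hx) (by omega) hper
  exact (hy.of_oocfT_iterate hx i).not_irrational_or_quadratic
end

section
/- Let E = [0, 1/2] ∪ {1}. For every x ∈ [0,1] there exists a least integer j ≥ 0 with R^j(x) ∈ E; denoting this least integer by n(x), one has T(x) = R^{n(x)+1}(x). In other words, the odd-odd continued fraction map T is the jump transformation associated to the Romik map R with respect to E. -/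
/-- The Romik map on `[0,1]`. -/
noncomputable def romik (x : ℝ) : ℝ :=
  if x ≤ 1 / 3 then x / (1 - 2 * x)
  else if x ≤ 1 / 2 then 1 / x - 2
  else 2 - 1 / x

/-!
Write `x ∈ [0,1)` as `x = 1 - 1/(k + s)` with `k = ⌊1/(1-x)⌋ ≥ 1` and `s ∈ [0,1)`. On points
`1 - 1/u` with `u ≥ 2` the Romik map acts as `u ↦ u - 1`, so `R^(k-1) x = 1 - 1/(1 + s) = s/(1+s)`
and the orbit enters `E` exactly when `u` drops to at most `2`. On the other hand both branches
of `T` at `x` agree with `R` at `s/(1+s)`, so `T x = R^k x`. The first entrance time is `k - 1`,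
except when `s = 0` and `k ≥ 2`: then the orbit already hits `1/2 ∈ E` at time `k - 2`, and
`T x = R^k x = R 0 = 0 = R^(k-1) x`.
-/

open Function

lemma romik_of_le_third {x : ℝ} (h : x ≤ 1 / 3) : romik x = x / (1 - 2 * x) :=
  if_pos h

lemma romik_of_third_le_of_le_half {x : ℝ} (h₁ : 1 / 3 ≤ x) (h₂ : x ≤ 1 / 2) :
    romik x = 1 / x - 2 := by
  rcases h₁.eq_or_lt with rfl | h₁
  · norm_num [romik]
  · rw [romik, if_neg h₁.not_ge, if_pos h₂]

lemma romik_of_half_le {x : ℝ} (h : 1 / 2 ≤ x) : romik x = 2 - 1 / x := by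
  rcases h.eq_or_lt with rfl | h
  · norm_num [romik]
  · rw [romik, if_neg (by linarith), if_neg (by linarith)]

lemma romik_one_sub_inv {u : ℝ} (hu : 2 ≤ u) : romik (1 - u⁻¹) = 1 - (u - 1)⁻¹ := by
  have hu₀ : u ≠ 0 := by positivity
  have hu₁ : u - 1 ≠ 0 := by linarith
  have : u⁻¹ ≤ 2⁻¹ := inv_anti₀ (by norm_num) hu
  rw [romik_of_half_le (by linarith)]
  field_simp
  ring

lemma romik_iterate_one_sub_inv (i : ℕ) {u : ℝ} (hu : i + 1 ≤ u) :
    romik^[i] (1 - u⁻¹) = 1 - (u - i)⁻¹ := by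
  induction i generalizing u with
  | zero => simp
  | succ i ih =>
    push_cast at hu
    rw [iterate_succ_apply, romik_one_sub_inv (by linarith), ih (by linarith)]
    push_cast
    ring_nf

lemma one_sub_inv_mem_iff {v : ℝ} (hv : 1 ≤ v) :
    1 - v⁻¹ ∈ Set.Icc (0 : ℝ) (1 / 2) ∪ {1} ↔ v ≤ 2 := by
  have hv₀ : 0 < v := by linarith
  have hv₁ : 0 < v⁻¹ := inv_pos.2 hv₀
  have half_le_iff : 2⁻¹ ≤ v⁻¹ ↔ v ≤ 2 := inv_le_inv₀ (by norm_num) hv₀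
  simp only [Set.mem_union, Set.mem_Icc, Set.mem_singleton_iff, sub_eq_self, hv₁.ne',
    or_false, one_div, inv_le_one_of_one_le₀ hv, sub_nonneg, true_and]
  rw [← half_le_iff]
  constructor <;> intro h <;> linarith

lemma exists_eq_one_sub_inv {x : ℝ} (hx₀ : 0 ≤ x) (hx₁ : x < 1) :
    ∃ (n : ℕ) (s : ℝ), 0 ≤ s ∧ s < 1 ∧ x = 1 - ((n : ℝ) + 1 + s)⁻¹ := by
  set u := (1 - x)⁻¹ - 1
  have hu : 0 ≤ u := by
    have : 1 ≤ (1 - x)⁻¹ := (one_le_inv₀ (by linarith)).2 (by linarith)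
    linarith
  refine ⟨⌊u⌋₊, u - ⌊u⌋₊, sub_nonneg.2 (Nat.floor_le hu),
    by linarith [Nat.lt_floor_add_one u], ?_⟩
  rw [show (⌊u⌋₊ : ℝ) + 1 + (u - ⌊u⌋₊) = (1 - x)⁻¹ by ring, inv_inv]
  ring

lemma romik_div_one_add_of_le_half {s : ℝ} (hs₀ : 0 ≤ s) (hs : s ≤ 1 / 2) :
    romik (s / (1 + s)) = s / (1 - s) := by
  have h1s : 1 + s ≠ 0 := by positivity
  rw [romik_of_le_third (by rw [div_le_iff₀ (by positivity)]; linarith),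
    show 1 - 2 * (s / (1 + s)) = (1 - s) / (1 + s) by field_simp; ring,
    div_div_div_cancel_right₀ h1s]

lemma romik_div_one_add_of_half_le {s : ℝ} (hs : 1 / 2 ≤ s) (hs₁ : s ≤ 1) :
    romik (s / (1 + s)) = (1 - s) / s := by
  have hs₀ : s ≠ 0 := by positivity
  rw [romik_of_third_le_of_le_half (by rw [le_div_iff₀ (by positivity)]; linarith)
    (by rw [div_le_iff₀ (by positivity)]; linarith)]
  field_simp
  ring

section orbit

variable {n : ℕ} {s : ℝ}

lemma oocfT_one_sub_inv (hs₀ : 0 ≤ s) (hs₁ : s < 1) :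
    oocfT (1 - ((n : ℝ) + 1 + s)⁻¹) = romik (s / (1 + s)) := by
  have hu : 0 < (n : ℝ) + 1 + s := by positivity
  have hfloor : ⌊1 / (1 - (1 - ((n : ℝ) + 1 + s)⁻¹))⌋ = (n : ℤ) + 1 := by
    rw [sub_sub_cancel, one_div, inv_inv, Int.floor_eq_iff]
    push_cast
    constructor <;> linarith
  have hx : 1 - ((n : ℝ) + 1 + s)⁻¹ ≠ 1 := by simp [hu.ne']
  have hbranch : 1 - ((n : ℝ) + 1 + s)⁻¹ < (2 * ((n : ℝ) + 1) - 1) / (2 * ((n : ℝ) + 1) + 1) ↔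
      s < 1 / 2 := by
    rw [show 1 - ((n : ℝ) + 1 + s)⁻¹ = (n + s) / (n + 1 + s) by field_simp; ring,
      div_lt_div_iff₀ hu (by positivity)]
    constructor <;> intro h <;> nlinarith
  have hnum : ((n : ℝ) + 1) * (1 - ((n : ℝ) + 1 + s)⁻¹) - ((n : ℝ) + 1 - 1) =
      s / (n + 1 + s) := by
    field_simp; ring
  have hden : ((n : ℝ) + 1) - ((n : ℝ) + 1 + 1) * (1 - ((n : ℝ) + 1 + s)⁻¹) =
      (1 - s) / (n + 1 + s) := by
    field_simp; ring
  rw [oocfT, if_neg hx, hfloor]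
  push_cast
  rw [hnum, hden, div_div_div_cancel_right₀ hu.ne', div_div_div_cancel_right₀ hu.ne']
  rcases lt_or_ge s (1 / 2) with hs | hs
  · rw [if_pos (hbranch.2 hs), romik_div_one_add_of_le_half hs₀ hs.le]
  · rw [if_neg (hbranch.not.2 hs.not_gt), romik_div_one_add_of_half_le hs hs₁.le]

lemma romik_iterate_mem_iff (hs₀ : 0 ≤ s) {i : ℕ} (hi : i ≤ n) :
    romik^[i] (1 - ((n : ℝ) + 1 + s)⁻¹) ∈ Set.Icc (0 : ℝ) (1 / 2) ∪ {1} ↔ (n : ℝ) + s ≤ i + 1 := by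
  have hi' : (i : ℝ) ≤ n := by exact_mod_cast hi
  rw [romik_iterate_one_sub_inv i (by linarith), one_sub_inv_mem_iff (by linarith)]
  constructor <;> intro h <;> linarith

lemma oocfT_eq_romik_iterate (hs₀ : 0 ≤ s) (hs₁ : s < 1) :
    oocfT (1 - ((n : ℝ) + 1 + s)⁻¹) = romik^[n + 1] (1 - ((n : ℝ) + 1 + s)⁻¹) := by
  have h1s : 1 + s ≠ 0 := by positivity
  rw [iterate_succ_apply', romik_iterate_one_sub_inv n (by linarith), oocfT_one_sub_inv hs₀ hs₁,
    show (n : ℝ) + 1 + s - n = 1 + s by ring]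
  congr 1
  field_simp
  ring

end orbit

/-- The odd-odd continued fraction map is the jump transformation associated to the
Romik map with respect to `E = [0, 1/2] ∪ {1}`: for every `x ∈ [0,1]` there is a least
`j ≥ 0` with `R^j(x) ∈ E`, and `T(x) = R^(j+1)(x)`. -/
theorem oocfT_jump_transformation_of_romik
    (x : ℝ) (hx : x ∈ Set.Icc (0 : ℝ) 1) :
    ∃ j : ℕ, romik^[j] x ∈ Set.Icc (0 : ℝ) (1 / 2) ∪ {1} ∧
      (∀ i < j, romik^[i] x ∉ Set.Icc (0 : ℝ) (1 / 2) ∪ {1}) ∧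
      oocfT x = romik^[j + 1] x := by
  rcases hx.2.eq_or_lt with rfl | hx₁
  · exact ⟨0, Or.inr rfl, fun i hi => absurd hi i.not_lt_zero, by norm_num [oocfT, romik]⟩
  obtain ⟨n, s, hs₀, hs₁, rfl⟩ := exists_eq_one_sub_inv hx.1 hx₁
  by_cases hdeg : s = 0 ∧ 1 ≤ n
  · obtain ⟨rfl, hn⟩ := hdeg
    obtain ⟨m, rfl⟩ := Nat.exists_eq_add_of_le' hn
    refine ⟨m, (romik_iterate_mem_iff le_rfl (by omega)).2 (by push_cast; linarith),
      fun i hi => ?_, ?_⟩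
    · rw [romik_iterate_mem_iff le_rfl (by omega)]
      have : (i : ℝ) + 1 ≤ m := by exact_mod_cast hi
      push_cast
      linarith
    · have hzero : romik^[m + 1] (1 - (((m + 1 : ℕ) : ℝ) + 1 + 0)⁻¹) = 0 := by
        rw [romik_iterate_one_sub_inv _ (by linarith)]
        norm_num
      rw [oocfT_eq_romik_iterate le_rfl hs₁, iterate_succ_apply', hzero]
      norm_num [romik]
  · refine ⟨n, (romik_iterate_mem_iff hs₀ le_rfl).2 (by linarith), fun i hi => ?_,
      oocfT_eq_romik_iterate hs₀ hs₁⟩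
    rw [romik_iterate_mem_iff hs₀ hi.le]
    have : (i : ℝ) + 1 ≤ n := by exact_mod_cast hi
    exact fun h => hdeg ⟨le_antisymm (by linarith) hs₀, by omega⟩
end

section
/- Let f : [0,1] → [0,1] be defined by f(x) = (1 − x)/(1 + x). Then f is an involution of [0,1] (f(f(x)) = x), and f conjugates the odd-odd continued fraction map to the even integer continued fraction map: f(T(x)) = T_EICF(f(x)) for every x ∈ [0,1]. -/
/-- The even integer continued fraction map on `[0,1]`: `0 ↦ 0`, and for `k ≥ 1`,
`x ↦ 1/x - 2k` if `x ∈ [1/(2k+1), 1/(2k)]`, `x ↦ 2k - 1/x` if `x ∈ (1/(2k), 1/(2k-1)]`;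
here `k = ⌊(1/x + 1)/2⌋`. -/
noncomputable def eicfT (x : ℝ) : ℝ :=
  if x = 0 then 0
  else if 2 * (⌊(1 / x + 1) / 2⌋ : ℝ) ≤ 1 / x then 1 / x - 2 * (⌊(1 / x + 1) / 2⌋ : ℝ)
  else 2 * (⌊(1 / x + 1) / 2⌋ : ℝ) - 1 / x

/-- The map `f(x) = (1-x)/(1+x)`. -/
noncomputable def invol (x : ℝ) : ℝ := (1 - x) / (1 + x)

theorem invol_invol {x : ℝ} (hx : 1 + x ≠ 0) : invol (invol x) = x := by
  unfold invol
  field_simp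
  ring

theorem invol_div (a : ℝ) {b : ℝ} (hb : b ≠ 0) : invol (a / b) = (b - a) / (b + a) := by
  rw [invol, one_sub_div hb, one_add_div hb, div_div_div_cancel_right₀ hb]

theorem one_div_invol (x : ℝ) : 1 / invol x = (1 + x) / (1 - x) :=
  one_div_div _ _

theorem invol_ne_zero {x : ℝ} (h1 : x ≠ 1) (h2 : 1 + x ≠ 0) : invol x ≠ 0 :=
  div_ne_zero (sub_ne_zero.2 h1.symm) h2

theorem eicfT_invol {x : ℝ} (h1 : x ≠ 1) (h2 : 1 + x ≠ 0) :
    eicfT (invol x) =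
      if 2 * (⌊1 / (1 - x)⌋ : ℝ) ≤ (1 + x) / (1 - x) then
        (1 + x) / (1 - x) - 2 * (⌊1 / (1 - x)⌋ : ℝ)
      else 2 * (⌊1 / (1 - x)⌋ : ℝ) - (1 + x) / (1 - x) := by
  have hdigit : (1 / invol x + 1) / 2 = 1 / (1 - x) := by
    rw [one_div_invol]
    field_simp [sub_ne_zero.2 h1.symm]
    ring
  rw [eicfT, if_neg (invol_ne_zero h1 h2), hdigit, one_div_invol]

theorem oocf_cut_le_iff {x K : ℝ} (hx : x < 1) (hK : 0 < 2 * K + 1) :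
    (2 * K - 1) / (2 * K + 1) ≤ x ↔ 2 * K ≤ (1 + x) / (1 - x) := by
  rw [div_le_iff₀ hK, le_div_iff₀ (sub_pos.2 hx)]
  constructor <;> intro h <;> linarith

theorem invol_oocf_increasing_branch {x K : ℝ} (hx : x ≠ 1) (hB : K - (K + 1) * x ≠ 0) :
    invol ((K * x - (K - 1)) / (K - (K + 1) * x)) = 2 * K - (1 + x) / (1 - x) := by
  have hsum : K - (K + 1) * x + (K * x - (K - 1)) = 1 - x := by ring
  rw [invol_div _ hB, hsum]
  field_simp [sub_ne_zero.2 hx.symm]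
  ring

theorem invol_oocf_decreasing_branch {x K : ℝ} (hx : x ≠ 1) (hA : K * x - (K - 1) ≠ 0) :
    invol ((K - (K + 1) * x) / (K * x - (K - 1))) = (1 + x) / (1 - x) - 2 * K := by
  have hsum : K * x - (K - 1) + (K - (K + 1) * x) = 1 - x := by ring
  rw [invol_div _ hA, hsum]
  field_simp [sub_ne_zero.2 hx.symm]
  ring

theorem invol_oocfT_of_lt_one {x : ℝ} (h0 : 0 ≤ x) (h1 : x < 1) :
    invol (oocfT x) = eicfT (invol x) := by
  rw [oocfT, if_neg h1.ne, eicfT_invol h1.ne (by linarith)]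
  have hpos : 0 < 1 - x := sub_pos.2 h1
  set K : ℝ := (⌊1 / (1 - x)⌋ : ℝ)
  have hK : 0 ≤ K := Int.cast_nonneg (Int.floor_nonneg.2 (by positivity))
  have hB : 0 < K - (K + 1) * x := by
    have hfloor := Int.lt_floor_add_one (1 / (1 - x))
    rw [div_lt_iff₀ hpos] at hfloor
    linarith
  have hcut := oocf_cut_le_iff h1 (by linarith : 0 < 2 * K + 1)
  split_ifs with hlt hle hle
  · exact absurd (hcut.2 hle) (not_le.2 hlt)
  · exact invol_oocf_increasing_branch h1.ne hB.ne'
  · have hcut' : 2 * K - 1 ≤ x * (2 * K + 1) :=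
      (div_le_iff₀ (by linarith)).1 (not_lt.1 hlt)
    -- `(K x - (K - 1)) (2K + 1) ≥ K (2K - 1) - (K - 1) (2K + 1) = 1`
    have hA : 0 < K * x - (K - 1) := by nlinarith [mul_le_mul_of_nonneg_left hcut' hK]
    exact invol_oocf_decreasing_branch h1.ne hA.ne'
  · exact absurd (hcut.1 (not_lt.1 hlt)) hle

/-- `f(x) = (1-x)/(1+x)` is an involution of `[0,1]` conjugating the odd-odd continued
fraction map with the even integer continued fraction map. -/
theorem invol_conjugates_oocfT_eicfT :
    (∀ x ∈ Set.Icc (0 : ℝ) 1, invol (invol x) = x) ∧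
      (∀ x ∈ Set.Icc (0 : ℝ) 1, invol (oocfT x) = eicfT (invol x)) := by
  refine ⟨fun x hx => invol_invol (by linarith [hx.1]), ?_⟩
  rintro x ⟨h0, h1⟩
  rcases h1.lt_or_eq with h1 | rfl
  · exact invol_oocfT_of_lt_one h0 h1
  · simp [oocfT, eicfT, invol]
end

section
/- For every irrational x ∈ (0,1) and every integer n ≥ 1, the sub-convergents and pseudo-convergents of the odd-odd continued fraction of x satisfy p'_n·q''_n − p''_n·q'_n = (−1)^n · ε_1·ε_2···ε_n. In particular |p'_n·q''_n − p''_n·q'_n| = 1 for all n ≥ 1. -/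
/-!
One step of the recursion transforms the columns `(p', q')`, `(p, q)` first by
`(p', p) ↦ (a p - p', p)`, of determinant `-1`, then by `(p', p) ↦ (p', 2 p' + ε p)`, of
determinant `ε`, so `p'_n q_n - p_n q'_n = -ε_n (p'_{n-1} q_{n-1} - p_{n-1} q'_{n-1})`.
Since `(p''_n, q''_n) = (p_n - p'_n, q_n - q'_n)`, passing to the pseudo-convergent is a column
operation and leaves the determinant unchanged.
-/

noncomputable def oocfDet (x : ℝ) (n : ℕ) : ℤ :=
  oocfP' x n * oocfQ x n - oocfP x n * oocfQ' x n

theorem oocfDet_succ (x : ℝ) (n : ℕ) :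
    oocfDet x (n + 1) = -oocfE (oocfT^[n] x) * oocfDet x n := by
  simp only [oocfDet, oocfP', oocfQ', oocfP, oocfQ, oocfConv]
  ring

theorem oocfDet_eq (x : ℝ) (n : ℕ) :
    oocfDet x n = (-1) ^ n * ∏ i ∈ Finset.range n, oocfE (oocfT^[i] x) := by
  induction n with
  | zero => simp [oocfDet, oocfP', oocfQ', oocfP, oocfQ, oocfConv]
  | succ n ih =>
    rw [oocfDet_succ, ih, Finset.prod_range_succ]
    ring

theorem oocfP'_mul_oocfQ''_sub (x : ℝ) (n : ℕ) :
    oocfP' x n * oocfQ'' x n - oocfP'' x n * oocfQ' x n = oocfDet x n := by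
  cases n with
  | zero => simp [oocfDet, oocfP', oocfQ', oocfP, oocfQ, oocfP'', oocfQ'', oocfConv]
  | succ n =>
    simp only [oocfDet, oocfP'', oocfQ'', oocfP', oocfQ', oocfP, oocfQ, oocfConv]
    ring

theorem abs_oocfE (y : ℝ) : |oocfE y| = 1 := by
  unfold oocfE
  split <;> simp

theorem oocf_sub_pseudo_convergents_det_general
    (x : ℝ)
    (n : ℕ) :
    oocfP' x n * oocfQ'' x n - oocfP'' x n * oocfQ' x n =
        (-1) ^ n * ∏ i ∈ Finset.range n, oocfE (oocfT^[i] x) ∧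
      |oocfP' x n * oocfQ'' x n - oocfP'' x n * oocfQ' x n| = 1 := by
  rw [oocfP'_mul_oocfQ''_sub, oocfDet_eq]
  refine ⟨rfl, ?_⟩
  simp [abs_mul, Finset.abs_prod, abs_oocfE]

/-- For every `n ≥ 1`, `p'_n q''_n - p''_n q'_n = (-1)^n · ε_1 ⋯ ε_n`; in particular the
absolute value of the left-hand side is `1`. -/
theorem oocf_sub_pseudo_convergents_det
    (x : ℝ) (hx : x ∈ Set.Ioo (0 : ℝ) 1) (hirr : Irrational x)
    (n : ℕ) (hn : 1 ≤ n) :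
    oocfP' x n * oocfQ'' x n - oocfP'' x n * oocfQ' x n =
        (-1) ^ n * ∏ i ∈ Finset.range n, oocfE (oocfT^[i] x) ∧
      |oocfP' x n * oocfQ'' x n - oocfP'' x n * oocfQ' x n| = 1 :=
  oocf_sub_pseudo_convergents_det_general x n
end
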